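/- arXiv:2604.02628 — 3 statements merged into one kernel-verified Lean document; each statement's English description precedes it below -/
import Mathlib

section
/- Let F be a homogeneous polynomial of degree 3 over ℂ in x_0, x_1, x_2, x_3, let t ∈ ℂ with t ≠ 0, and let f := x_4^3 − F(x_0,x_1,x_2,x_3) + x_5·(x_0·x_3 − x_1·x_2) + t·x_0·x_5^2. A 2-dimensional linear subspace W ⊆ ℂ^6 with e_5 ∈ W satisfies f(v) = 0 for all v ∈ W if and only if there exists a nonzero u ∈ W with u_5 = 0, u_0 = 0, u_1·u_2 = 0, u_4^3 = F(u_0,u_1,u_2,u_3), and W = span{e_5, u}. (Equivalently: for t ≠ 0, the lines on Y_{F,t} passing through p_0 are exactly the lines joining p_0 to a point of C_1 ∪ C_2.) -/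
open MvPolynomial

/-- The cubic form `f = x₄³ − F(x₀,x₁,x₂,x₃) + x₅(x₀x₃ − x₁x₂) + t·x₀x₅²` defining the
cyclic cubic fourfold `Y_{F,t} ⊂ ℙ⁵`. -/
noncomputable def fPoly (F : MvPolynomial (Fin 4) ℂ) (t : ℂ) : MvPolynomial (Fin 6) ℂ :=
  X 4 ^ 3 - rename (Fin.castLE (by norm_num)) F
    + X 5 * (X 0 * X 3 - X 1 * X 2) + C t * X 0 * X 5 ^ 2

/-- The vector `e₅ = (0,0,0,0,0,1)`, representing the point `p₀ = [0:0:0:0:0:1]`. -/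
def e5 : Fin 6 → ℂ := ![0, 0, 0, 0, 0, 1]

/-!
Restricted to the plane spanned by `e₅` and a vector `u` with `u₅ = 0`, the cubic `f` becomes
`b³(u₄³ − F(u)) + ab²(u₀u₃ − u₁u₂) + ta²b·u₀` in the coordinates `a·e₅ + b·u`. Every such `W`
has this shape, so `f|_W = 0` exactly when these three coefficients vanish, and for `t ≠ 0` that
is the condition `u₀ = 0`, `u₁u₂ = 0`, `u₄³ = F(u)` defining `C₁ ∪ C₂`.
-/

lemma MvPolynomial.IsHomogeneous.eval_smul {R σ : Type*} [CommSemiring R]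
    {φ : MvPolynomial σ R} {n : ℕ} (hφ : φ.IsHomogeneous n) (c : R) (x : σ → R) :
    eval (c • x) φ = c ^ n * eval x φ := by
  rw [eval_eq, eval_eq, Finset.mul_sum]
  refine Finset.sum_congr rfl fun d hd => ?_
  simp only [Pi.smul_apply, smul_eq_mul, mul_pow, Finset.prod_mul_distrib,
    Finset.prod_pow_eq_pow_sum, ← hφ.degree_eq_sum_deg_support hd]
  ring

lemma Polynomial.coeffs_eq_zero_of_forall_quadratic_eq_zero {R : Type*} [CommRing R] [IsDomain R]
    [Infinite R] {a b c : R} (h : ∀ x, a + b * x + c * x ^ 2 = 0) : a = 0 ∧ b = 0 ∧ c = 0 := by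
  set p : Polynomial R := .C a + .C b * .X + .C c * .X ^ 2
  have hp : p = 0 := Polynomial.funext fun x => by simpa [p] using h x
  refine ⟨?_, ?_, ?_⟩
  · simpa [p] using congrArg (Polynomial.coeff · 0) hp
  · simpa [p] using congrArg (Polynomial.coeff · 1) hp
  · simpa [p] using congrArg (Polynomial.coeff · 2) hp

lemma Submodule.exists_eq_span_pair_of_finrank_eq_two {K V : Type*} [Field K] [AddCommGroup V]
    [Module K V] {W : Submodule K V} (hW : Module.finrank K W = 2) {e : V} (he : e ∈ W)
    (φ : V →ₗ[K] K) (hφ : φ e = 1) : ∃ u ∈ W, u ≠ 0 ∧ φ u = 0 ∧ W = span K {e, u} := by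
  have : FiniteDimensional K W := .of_finrank_pos (by omega)
  have he0 : e ≠ 0 := by rintro rfl; simp at hφ
  obtain ⟨w, hwW, hw⟩ : ∃ w ∈ W, w ∉ span K {e} := by
    by_contra! h
    have := Submodule.finrank_mono (show W ≤ span K {e} from h)
    rw [hW, finrank_span_singleton he0] at this
    omega
  set u := w - φ w • e
  have huW : u ∈ W := W.sub_mem hwW (W.smul_mem _ he)
  have hu : u ≠ 0 := fun h => hw (sub_eq_zero.mp h ▸ smul_mem _ _ (mem_span_singleton_self e))
  have hli : LinearIndependent K ![e, u] := by
    refine LinearIndependent.pair_iff.mpr fun a b hab => ?_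
    have ha : a = 0 := by simpa [u, hφ] using congrArg φ hab
    subst ha
    exact ⟨rfl, (smul_eq_zero.mp (by simpa using hab)).resolve_right hu⟩
  refine ⟨u, huW, hu, by simp [u, hφ], (eq_of_le_of_finrank_eq ?_ ?_).symm⟩
  · rw [span_le]
    rintro x (rfl | rfl)
    exacts [he, huW]
  · rw [hW, ← Matrix.range_cons_cons_empty, finrank_span_eq_card hli]
    simp

lemma eval_fPoly (F : MvPolynomial (Fin 4) ℂ) (t : ℂ) (v : Fin 6 → ℂ) :
    eval v (fPoly F t) =
      v 4 ^ 3 - eval ![v 0, v 1, v 2, v 3] F + v 5 * (v 0 * v 3 - v 1 * v 2)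
        + t * v 0 * v 5 ^ 2 := by
  have hF : eval v (rename (Fin.castLE (by norm_num : 4 ≤ 6)) F) =
      eval ![v 0, v 1, v 2, v 3] F := by
    rw [eval_rename]
    exact congrArg (fun x => eval x F) (by ext i; fin_cases i <;> rfl)
  simp only [fPoly, map_add, map_sub, map_mul, map_pow, eval_C, eval_X, hF]

lemma eval_fPoly_smul_e5_add_smul {F : MvPolynomial (Fin 4) ℂ} (hF : F.IsHomogeneous 3) (t : ℂ)
    {u : Fin 6 → ℂ} (hu5 : u 5 = 0) (a b : ℂ) :
    eval (a • e5 + b • u) (fPoly F t) =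
      b ^ 3 * (u 4 ^ 3 - eval ![u 0, u 1, u 2, u 3] F)
        + (u 0 * u 3 - u 1 * u 2) * a * b ^ 2 + t * u 0 * b * a ^ 2 := by
  have hpt : ![(a • e5 + b • u) 0, (a • e5 + b • u) 1, (a • e5 + b • u) 2, (a • e5 + b • u) 3]
      = b • ![u 0, u 1, u 2, u 3] := by
    ext i
    fin_cases i <;> simp [e5]
  rw [eval_fPoly, hpt, hF.eval_smul]
  simp only [e5, hu5, Pi.add_apply, Pi.smul_apply, smul_eq_mul, Matrix.cons_val, mul_zero, mul_one,
    zero_add, add_zero]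
  ring

/-- For `t ≠ 0`, the lines on `Y_{F,t}` passing through `p₀` are exactly the lines
joining `p₀` to a point of `C₁ ∪ C₂`. -/
theorem stmt1 (F : MvPolynomial (Fin 4) ℂ) (hF : F.IsHomogeneous 3)
    (t : ℂ) (ht : t ≠ 0)
    (W : Submodule ℂ (Fin 6 → ℂ)) (hWdim : Module.finrank ℂ ↥W = 2) (he5 : e5 ∈ W) :
    (∀ v ∈ W, eval v (fPoly F t) = 0) ↔
      ∃ u : Fin 6 → ℂ, u ∈ W ∧ u ≠ 0 ∧ u 5 = 0 ∧ u 0 = 0 ∧ u 1 * u 2 = 0 ∧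
        u 4 ^ 3 = eval ![u 0, u 1, u 2, u 3] F ∧
        W = Submodule.span ℂ {e5, u} := by
  constructor
  · intro hW
    obtain ⟨u, huW, hu, hu5, rfl⟩ :=
      Submodule.exists_eq_span_pair_of_finrank_eq_two hWdim he5 (LinearMap.proj 5) rfl
    have hline (a : ℂ) := hW _ (Submodule.mem_span_pair.mpr ⟨a, 1, rfl⟩)
    simp only [eval_fPoly_smul_e5_add_smul hF t hu5, one_pow, one_mul, mul_one] at hline
    obtain ⟨hcube, hquad, hlin⟩ := Polynomial.coeffs_eq_zero_of_forall_quadratic_eq_zero hline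
    have hu0 : u 0 = 0 := (mul_eq_zero.mp hlin).resolve_left ht
    refine ⟨u, huW, hu, hu5, hu0, ?_, sub_eq_zero.mp hcube, rfl⟩
    simpa [hu0] using hquad
  · rintro ⟨u, -, -, hu5, hu0, h12, hcube, rfl⟩ v hv
    obtain ⟨a, b, rfl⟩ := Submodule.mem_span_pair.mp hv
    simp [eval_fPoly_smul_e5_add_smul hF t hu5, hu0, h12, hcube]
end

section
/- Let F be a homogeneous polynomial of degree 3 over ℂ in x_0, x_1, x_2, x_3 such that the binary cubic G(y,z) := F(0,0,y,z) is not of the form c·ℓ(y,z)^3 for any scalar c ∈ ℂ and linear form ℓ. Let t ∈ ℂ and f := x_4^3 − F(x_0,x_1,x_2,x_3) + x_5·(x_0·x_3 − x_1·x_2) + t·x_0·x_5^2. If W ⊆ ℂ^6 is a 2-dimensional linear subspace on which f vanishes identically and W contains two linearly independent vectors w_1, w_2, each of the form w_j = μ_j·e_5 + u_j with (u_j)_0 = (u_j)_1 = (u_j)_5 = 0 and (u_j)_4^3 = F((u_j)_0,(u_j)_1,(u_j)_2,(u_j)_3), then e_5 ∈ W. (A line on Y_{F,t} meeting the cone Ĉ_1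 at more than one point must pass through the vertex p_0.) -/
open MvPolynomial

/-!
The span of the two given vectors lies in `W ∩ {x₀ = x₁ = 0}`, where `f` reduces to
`x₄³ − G(x₂, x₃)`. If `(x₂, x₃)` restricted to this span is an isomorphism onto `ℂ²`, then `x₄`
composed with its inverse is a linear form `ℓ` with `G = ℓ³`, which is excluded. Otherwise some
nonzero vector of `W` has `x₀ = x₁ = x₂ = x₃ = 0`, hence also `x₄³ = G(0,0) = 0`, so it is a
nonzero multiple of `e₅`.
-/

lemma exists_eq_linear_form {K : Type*} [CommSemiring K] (ℓ : (Fin 2 → K) →ₗ[K] K) :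
    ∃ a b : K, ∀ y z : K, ℓ ![y, z] = a * y + b * z :=
  ⟨ℓ ![1, 0], ℓ ![0, 1], fun y z => by
    have : ![y, z] = y • ![1, 0] + z • ![0, 1] := by ext i; fin_cases i <;> simp
    rw [this, map_add, map_smul, map_smul, smul_eq_mul, smul_eq_mul, mul_comm y, mul_comm z]⟩

lemma eq_smul_e5 {v : Fin 6 → ℂ} (h0 : v 0 = 0) (h1 : v 1 = 0) (h2 : v 2 = 0) (h3 : v 3 = 0)
    (h4 : v 4 = 0) : v = v 5 • e5 := by
  ext i
  fin_cases i <;> simp [e5, h0, h1, h2, h3, h4]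

lemma eval_fPoly_of_apply_zero_of_apply_one (F : MvPolynomial (Fin 4) ℂ) (t : ℂ)
    {v : Fin 6 → ℂ} (h0 : v 0 = 0) (h1 : v 1 = 0) :
    eval v (fPoly F t) = v 4 ^ 3 - eval ![0, 0, v 2, v 3] F := by
  have hc : v ∘ Fin.castLE (show 4 ≤ 6 by norm_num) = ![0, 0, v 2, v 3] := by
    ext i
    fin_cases i <;> simp [h0, h1]
  simp only [fPoly, map_add, map_sub, map_mul, map_pow, eval_X, eval_C, eval_rename, hc, h0, h1]
  ring

section

variable {F : MvPolynomial (Fin 4) ℂ} {t : ℂ} {W : Submodule ℂ (Fin 6 → ℂ)}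

lemma pow_three_apply_four_eq_eval (hWf : ∀ v ∈ W, eval v (fPoly F t) = 0)
    {v : Fin 6 → ℂ} (hv : v ∈ W) (h0 : v 0 = 0) (h1 : v 1 = 0) :
    v 4 ^ 3 = eval ![0, 0, v 2, v 3] F := by
  have := hWf v hv
  rw [eval_fPoly_of_apply_zero_of_apply_one F t h0 h1] at this
  exact sub_eq_zero.mp this

lemma e5_mem_of_mem (hWf : ∀ v ∈ W, eval v (fPoly F t) = 0)
    {v : Fin 6 → ℂ} (hv : v ∈ W) (hv_ne : v ≠ 0)
    (h0 : v 0 = 0) (h1 : v 1 = 0) (h2 : v 2 = 0) (h3 : v 3 = 0) : e5 ∈ W := by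
  have hG0 : eval ![0, 0, 0, 0] F = 0 := by
    simpa using (pow_three_apply_four_eq_eval hWf W.zero_mem rfl rfl).symm
  have h4 : v 4 = 0 := by
    simpa [h2, h3, hG0] using pow_three_apply_four_eq_eval hWf hv h0 h1
  have hv_eq := eq_smul_e5 h0 h1 h2 h3 h4
  have h5 : v 5 ≠ 0 := fun h5 => hv_ne (by rw [hv_eq, h5, zero_smul])
  rw [hv_eq] at hv
  exact (W.smul_mem_iff h5).mp hv

lemma e5_mem_or_exists_cube (hWf : ∀ v ∈ W, eval v (fPoly F t) = 0)
    (w : Fin 2 → Fin 6 → ℂ) (hli : LinearIndependent ℂ w) (hw : ∀ i, w i ∈ W)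
    (hw0 : ∀ i, w i 0 = 0) (hw1 : ∀ i, w i 1 = 0) :
    e5 ∈ W ∨ ∃ a b : ℂ, ∀ y z : ℂ, eval ![0, 0, y, z] F = (a * y + b * z) ^ 3 := by
  set L := Fintype.linearCombination ℂ w
  have hLW : ∀ s, L s ∈ W := fun s => by
    rw [Fintype.linearCombination_apply]
    exact W.sum_mem fun i _ => W.smul_mem _ (hw i)
  have hL0 : ∀ s, L s 0 = 0 := fun s => by simp [L, Fintype.linearCombination_apply, hw0]
  have hL1 : ∀ s, L s 1 = 0 := fun s => by simp [L, Fintype.linearCombination_apply, hw1]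
  set M := LinearMap.funLeft ℂ ℂ ![2, 3] ∘ₗ L
  by_cases hM : Function.Injective M
  · right
    set e := LinearEquiv.ofInjectiveEndo M hM
    obtain ⟨a, b, hab⟩ := exists_eq_linear_form (LinearMap.proj 4 ∘ₗ L ∘ₗ e.symm.toLinearMap)
    refine ⟨a, b, fun y z => ?_⟩
    set s := e.symm ![y, z]
    have hMs : M s = ![y, z] := e.apply_symm_apply _
    have hcube := pow_three_apply_four_eq_eval hWf (hLW s) (hL0 s) (hL1 s)
    rw [show L s 2 = y from congr_fun hMs 0, show L s 3 = z from congr_fun hMs 1] at hcube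
    rw [← hcube, ← hab]
    rfl
  · left
    obtain ⟨s, hs, hs_ne⟩ : ∃ s, M s = 0 ∧ s ≠ 0 := by
      simpa [injective_iff_map_eq_zero] using hM
    have hLs : L s ≠ 0 := fun h => hs_ne (hli.fintypeLinearCombination_injective (by simpa using h))
    exact e5_mem_of_mem hWf (hLW s) hLs (hL0 s) (hL1 s) (congr_fun hs 0) (congr_fun hs 1)

end

lemma apply_zero_eq_zero_and_apply_one_eq_zero {w u : Fin 6 → ℂ} {μ : ℂ} (h : w = μ • e5 + u)
    (hu0 : u 0 = 0) (hu1 : u 1 = 0) : w 0 = 0 ∧ w 1 = 0 := by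
  subst h
  simp [e5, hu0, hu1]

theorem stmt6_general (F : MvPolynomial (Fin 4) ℂ)
    (hG : ¬ ∃ c a b : ℂ, ∀ y z : ℂ, eval ![0, 0, y, z] F = c * (a * y + b * z) ^ 3)
    (t : ℂ) (W : Submodule ℂ (Fin 6 → ℂ))
    (hWf : ∀ v ∈ W, eval v (fPoly F t) = 0)
    (w1 w2 : Fin 6 → ℂ) (hw1 : w1 ∈ W) (hw2 : w2 ∈ W)
    (hli : LinearIndependent ℂ ![w1, w2])
    (hc1 : ∃ mu : ℂ, ∃ u : Fin 6 → ℂ, w1 = mu • e5 + u ∧ u 0 = 0 ∧ u 1 = 0 ∧ u 5 = 0 ∧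
      u 4 ^ 3 = eval ![u 0, u 1, u 2, u 3] F)
    (hc2 : ∃ mu : ℂ, ∃ u : Fin 6 → ℂ, w2 = mu • e5 + u ∧ u 0 = 0 ∧ u 1 = 0 ∧ u 5 = 0 ∧
      u 4 ^ 3 = eval ![u 0, u 1, u 2, u 3] F) :
    e5 ∈ W := by
  obtain ⟨_, _, hw1_eq, hu10, hu11, -⟩ := hc1
  obtain ⟨_, _, hw2_eq, hu20, hu21, -⟩ := hc2
  obtain ⟨hw10, hw11⟩ := apply_zero_eq_zero_and_apply_one_eq_zero hw1_eq hu10 hu11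
  obtain ⟨hw20, hw21⟩ := apply_zero_eq_zero_and_apply_one_eq_zero hw2_eq hu20 hu21
  rcases e5_mem_or_exists_cube hWf ![w1, w2] hli (Fin.forall_fin_two.mpr ⟨hw1, hw2⟩)
      (Fin.forall_fin_two.mpr ⟨hw10, hw20⟩) (Fin.forall_fin_two.mpr ⟨hw11, hw21⟩) with
    h | ⟨a, b, hab⟩
  · exact h
  · exact (hG ⟨1, a, b, by simpa using hab⟩).elim

/-- If the binary cubic `G(y,z) = F(0,0,y,z)` is not proportional to the cube of a
linear form, then a line on `Y_{F,t}` meeting the cone `Ĉ₁` at more than one point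
must pass through the vertex `p₀`. -/
theorem stmt6 (F : MvPolynomial (Fin 4) ℂ) (hF : F.IsHomogeneous 3)
    (hG : ¬ ∃ c a b : ℂ, ∀ y z : ℂ, eval ![0, 0, y, z] F = c * (a * y + b * z) ^ 3)
    (t : ℂ) (W : Submodule ℂ (Fin 6 → ℂ)) (hWdim : Module.finrank ℂ ↥W = 2)
    (hWf : ∀ v ∈ W, eval v (fPoly F t) = 0)
    (w1 w2 : Fin 6 → ℂ) (hw1 : w1 ∈ W) (hw2 : w2 ∈ W)
    (hli : LinearIndependent ℂ ![w1, w2])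
    (hc1 : ∃ mu : ℂ, ∃ u : Fin 6 → ℂ, w1 = mu • e5 + u ∧ u 0 = 0 ∧ u 1 = 0 ∧ u 5 = 0 ∧
      u 4 ^ 3 = eval ![u 0, u 1, u 2, u 3] F)
    (hc2 : ∃ mu : ℂ, ∃ u : Fin 6 → ℂ, w2 = mu • e5 + u ∧ u 0 = 0 ∧ u 1 = 0 ∧ u 5 = 0 ∧
      u 4 ^ 3 = eval ![u 0, u 1, u 2, u 3] F) :
    e5 ∈ W :=
  stmt6_general F hG t W hWf w1 w2 hw1 hw2 hli hc1 hc2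
end

section
/- Let F be a homogeneous polynomial of degree 3 over ℂ in x_0, x_1, x_2, x_3, let t ∈ ℂ with t ≠ 0, and let f := x_4^3 − F(x_0,x_1,x_2,x_3) + x_5·(x_0·x_3 − x_1·x_2) + t·x_0·x_5^2. Then there exists a vector w ∈ ℂ^6 with f(w) = 0 and Σ_{j=0}^{5} (∂f/∂x_j)(e_5)·w_j = 0 such that f does not vanish identically on span{e_5, w}. (In other words, the point p_0 = [0:0:0:0:0:1] is not an Eckardt point of the cyclic cubic fourfold Y_{F,t}: the intersection of Y_{F,t} with its tangent hyperplane at p_0 is not a cone with vertex p_0.) -/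
open MvPolynomial

/-!
The tangent hyperplane of `Y_{F,t}` at `p₀` is `t·w₀ = 0`: the gradient of the cubic `F`
vanishes at the origin. The point `w = (0, 1, 1, 0, 0, -F(0,1,1,0))` lies on `Y_{F,t}` and on
this hyperplane, but `f(e₅ + w) = -1`.
-/

namespace MvPolynomial

variable {σ τ R : Type*} [CommSemiring R] {φ : MvPolynomial σ R} {n : ℕ}

theorem IsHomogeneous.eval_zero_eq_zero (hφ : φ.IsHomogeneous n) (hn : n ≠ 0) :
    eval 0 φ = 0 := by
  rw [eval_zero, constantCoeff_eq]
  exact hφ.coeff_eq_zero (by simpa using hn.symm)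

theorem IsHomogeneous.eval_zero_pderiv_eq_zero (hφ : φ.IsHomogeneous n) (hn : 2 ≤ n) (i : σ) :
    eval 0 (pderiv i φ) = 0 :=
  hφ.pderiv.eval_zero_eq_zero (by omega)

theorem pderiv_rename_of_notMem_range {f : σ → τ} {j : τ} (hj : j ∉ Set.range f)
    (p : MvPolynomial σ R) : pderiv j (rename f p) = 0 := by
  classical
  refine pderiv_eq_zero_of_notMem_vars fun hmem => hj ?_
  obtain ⟨i, -, rfl⟩ := Finset.mem_image.mp (vars_rename f p hmem)
  exact ⟨i, rfl⟩

theorem IsHomogeneous.eval_pderiv_rename_eq_zero {f : σ → τ} (hf : f.Injective)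
    (hφ : φ.IsHomogeneous n) (hn : 2 ≤ n) {a : τ → R} (ha : a ∘ f = 0) (j : τ) :
    eval a (pderiv j (rename f φ)) = 0 := by
  by_cases hj : j ∈ Set.range f
  · obtain ⟨i, rfl⟩ := hj
    rw [pderiv_rename hf, eval_rename, ha, hφ.eval_zero_pderiv_eq_zero hn]
  · rw [pderiv_rename_of_notMem_range hj, map_zero]

end MvPolynomial

lemma sum_eval_e5_pderiv_fPoly_mul {F : MvPolynomial (Fin 4) ℂ} (hF : F.IsHomogeneous 3)
    (t : ℂ) (w : Fin 6 → ℂ) :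
    ∑ j : Fin 6, eval e5 (pderiv j (fPoly F t)) * w j = t * w 0 := by
  have hgradF : ∀ j, eval e5 (pderiv j (rename (Fin.castLE (by norm_num)) F)) = 0 :=
    hF.eval_pderiv_rename_eq_zero (Fin.castLE_injective _) (by norm_num)
      (by ext i; fin_cases i <;> rfl)
  rw [e5] at hgradF ⊢
  simp [fPoly, Fin.sum_univ_six, hgradF, pderiv_X, Pi.single_apply]

theorem stmt14_general (F : MvPolynomial (Fin 4) ℂ) (hF : F.IsHomogeneous 3)
    (t : ℂ) :
    ∃ w : Fin 6 → ℂ, eval w (fPoly F t) = 0 ∧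
      (∑ j : Fin 6, eval e5 (pderiv j (fPoly F t)) * w j) = 0 ∧
      ¬ ∀ v ∈ Submodule.span ℂ {e5, w}, eval v (fPoly F t) = 0 := by
  set c := eval ![0, 1, 1, 0] F
  set w : Fin 6 → ℂ := ![0, 1, 1, 0, 0, -c]
  refine ⟨w, ?_, ?_, fun h => ?_⟩
  · simp [eval_fPoly, w, c]
  · simp [sum_eval_e5_pderiv_fPoly_mul hF, w]
  · have hsum := h (e5 + w) (Submodule.add_mem _ (Submodule.subset_span (by simp))
      (Submodule.subset_span (by simp)))
    simp [eval_fPoly, e5, w, c] at hsum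

/-- For `t ≠ 0`, the point `p₀ = [0:0:0:0:0:1]` is not an Eckardt point of `Y_{F,t}`:
there is a point `w` of `Y_{F,t}` lying on the tangent hyperplane of `Y_{F,t}` at `p₀`
such that the line joining `p₀` and `w` is not contained in `Y_{F,t}`. -/
theorem stmt14 (F : MvPolynomial (Fin 4) ℂ) (hF : F.IsHomogeneous 3)
    (t : ℂ) (ht : t ≠ 0) :
    ∃ w : Fin 6 → ℂ, eval w (fPoly F t) = 0 ∧
      (∑ j : Fin 6, eval e5 (pderiv j (fPoly F t)) * w j) = 0 ∧
      ¬ ∀ v ∈ Submodule.span ℂ {e5, w}, eval v (fPoly F t) = 0 :=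
  stmt14_general F hF t
end
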